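/- arXiv:2406.06363 — 2 statements merged into one kernel-verified Lean document; each statement's English description precedes it below -/
import Mathlib

section
/- Symmetrically, if f_d is a point of F closest to the destination y, then d(x, f_d) + d(f_d, y) ≤ 3·min_{f∈F}(d(x,f) + d(f,y)). -/
/-- If `f_d ∈ F` is a closest point of `F` to the destination `y`, then
`d(x,f_d) + d(f_d,y) ≤ 3 · min_{f ∈ F} (d(x,f) + d(f,y))`. -/
theorem nearest_to_destination_three_approx {V : Type*} [MetricSpace V]
    (F : Finset V) (hF : F.Nonempty) (x y fd : V) (hfd : fd ∈ F)
    (hnear : ∀ f ∈ F, dist y fd ≤ dist y f) :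
    dist x fd + dist fd y ≤ 3 * F.inf' hF (fun f => dist x f + dist f y) := by
  obtain ⟨f, hf, hfe⟩ := F.exists_mem_eq_inf' hF (fun f => dist x f + dist f y)
  rw [hfe]
  have h1 : dist x fd ≤ dist x f + dist f y + dist y fd := by
    calc dist x fd ≤ dist x f + dist f fd := dist_triangle _ _ _
    _ ≤ dist x f + (dist f y + dist y fd) := by gcongr; exact dist_triangle _ _ _
    _ = _ := by ring
  have h2 := hnear f hf
  have h3 : dist fd y = dist y fd := dist_comm _ _
  have h4 : dist y f = dist f y := dist_comm _ _
  have h5 : (0:ℝ) ≤ dist x f := dist_nonneg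
  linarith
end

section
/- If sorted vectors x ⪰ y (majorization), and the decreasing indices i ≤ j, then the sorted versions of x + e_i and y + e_j satisfy x + e_i ⪰ y + e_j, where e_k is the k-th standard basis vector (adding 1 to the k-th largest entry). -/
/-!
For decreasing `x`, majorization says that every `k`-element sum of `y` is at most
`x 0 + ⋯ + x (k - 1)`, the sum of the `k` largest entries of `x`. Adding `e_j` raises a `k`-sum
of `y` by one only when it contains `j`, and the first `k` entries of `x + e_i` absorb this when
`i < k` or when the inequality was strict. In the remaining tight case `k ≤ i ≤ j`, trade
`x (k - 1)` for `x i`: tightness forces `x (k - 1) ≤ y j`, so `y` dominates `x` entrywise on the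
block `[k - 1, j]`, and the prefix inequality at `j + 1` then bounds `y i - x i` by the slack of
the prefix inequality at `k - 1`.
-/

/-- `x` majorizes `y` (integer vectors). -/
def Majorizes {n : ℕ} (x y : Fin n → ℤ) : Prop :=
  (∀ s : Finset (Fin n), ∃ t : Finset (Fin n),
      t.card = s.card ∧ ∑ i ∈ s, y i ≤ ∑ i ∈ t, x i) ∧
  ∑ i, x i = ∑ i, y i

open Finset

def firstIndices (n k : ℕ) : Finset (Fin n) := {m | (m : ℕ) < k}

section FirstIndices

variable {n k : ℕ}

@[simp]
lemma mem_firstIndices {m : Fin n} : m ∈ firstIndices n k ↔ (m : ℕ) < k := by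
  simp [firstIndices]

lemma card_firstIndices (hk : k ≤ n) : #(firstIndices n k) = k := by
  simp [firstIndices, Fin.card_filter_val_lt, hk]

lemma sum_firstIndices_succ {M : Type*} [AddCommMonoid M] (f : Fin n → M) (hk : k < n) :
    ∑ m ∈ firstIndices n (k + 1), f m = ∑ m ∈ firstIndices n k, f m + f ⟨k, hk⟩ := by
  have : firstIndices n (k + 1) = insert ⟨k, hk⟩ (firstIndices n k) := by
    ext m
    simp only [mem_insert, mem_firstIndices, Fin.ext_iff]
    omega
  rw [this, sum_insert (by simp), add_comm]

end FirstIndices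

theorem Antitone.sum_le_sum_firstIndices {M : Type*} [AddCommMonoid M] [PartialOrder M]
    [IsOrderedAddMonoid M] {n : ℕ} {f : Fin n → M} (hf : Antitone f) (s : Finset (Fin n)) :
    ∑ m ∈ s, f m ≤ ∑ m ∈ firstIndices n #s, f m := by
  induction s using Finset.induction_on_max with
  | empty => simp [firstIndices]
  | insert a s hlt ih =>
    have has : a ∉ s := fun h => (hlt a h).false
    have hcard : #s ≤ a := by
      simpa using card_le_card (fun m hm => mem_Iio.2 (hlt m hm) : s ⊆ Iio a)
    rw [sum_insert has, card_insert_of_notMem has, sum_firstIndices_succ f (hcard.trans_lt a.2),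
      add_comm]
    exact add_le_add ih (hf (Fin.le_def.2 hcard))

section Majorization

variable {n : ℕ} {x y : Fin n → ℤ}

theorem Majorizes.sum_le_sum_firstIndices (hx : Antitone x) (h : Majorizes x y)
    (s : Finset (Fin n)) : ∑ m ∈ s, y m ≤ ∑ m ∈ firstIndices n #s, x m := by
  obtain ⟨t, ht, hle⟩ := h.1 s
  exact ht ▸ hle.trans (hx.sum_le_sum_firstIndices t)

theorem Majorizes.sum_firstIndices_le (hx : Antitone x) (h : Majorizes x y) {k : ℕ}
    (hk : k ≤ n) : ∑ m ∈ firstIndices n k, y m ≤ ∑ m ∈ firstIndices n k, x m := by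
  simpa [card_firstIndices hk] using h.sum_le_sum_firstIndices hx (firstIndices n k)

lemma sum_firstIndices_add_le_of_le (hx : Antitone x) (hy : Antitone y) {k i j : Fin n}
    (hki : k ≤ i) (hij : i ≤ j) (hxy : x k ≤ y j)
    (hpre : ∑ m ∈ firstIndices n (j + 1), y m ≤ ∑ m ∈ firstIndices n (j + 1), x m) :
    ∑ m ∈ firstIndices n k, y m + y i ≤ ∑ m ∈ firstIndices n k, x m + x i := by
  set D := (firstIndices n (j + 1)).filter fun m => ¬ m < k
  have hsplit (f : Fin n → ℤ) :
      ∑ m ∈ firstIndices n (j + 1), f m = ∑ m ∈ firstIndices n k, f m + ∑ m ∈ D, f m := by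
    rw [← sum_filter_add_sum_filter_not _ fun m => m < k]
    congr 2
    ext m
    simp only [mem_filter, mem_firstIndices, Fin.lt_def]
    have := Fin.le_def.1 (hki.trans hij)
    omega
  have hiD : i ∈ D := by
    simp only [D, mem_filter, mem_firstIndices, not_lt]
    exact ⟨Nat.lt_succ_of_le hij, hki⟩
  have hgap : y i - x i ≤ ∑ m ∈ D, (y m - x m) := by
    refine single_le_sum (f := fun m => y m - x m) (fun m hm => sub_nonneg.2 ?_) hiD
    simp only [D, mem_filter, mem_firstIndices, not_lt] at hm
    exact (hx hm.2).trans (hxy.trans (hy (Nat.le_of_lt_succ hm.1)))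
  rw [hsplit, hsplit] at hpre
  rw [sum_sub_distrib] at hgap
  linarith

theorem Majorizes.sum_le_sum_firstIndices_add_of_tight (hx : Antitone x) (hy : Antitone y)
    (h : Majorizes x y) {i j : Fin n} (hij : i ≤ j) {s : Finset (Fin n)} {k : ℕ} (hjs : j ∈ s)
    (hk : #s = k + 1) (hki : k < i)
    (htight : ∑ m ∈ firstIndices n (k + 1), x m ≤ ∑ m ∈ s, y m) :
    ∑ m ∈ s, y m ≤ ∑ m ∈ firstIndices n k, x m + x i := by
  have hkn : k < n := hki.trans i.2
  have herase : ∑ m ∈ s, y m ≤ ∑ m ∈ firstIndices n k, y m + y j := by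
    have := hy.sum_le_sum_firstIndices (s.erase j)
    rw [card_erase_of_mem hjs, hk, Nat.add_sub_cancel] at this
    linarith [add_sum_erase s y hjs]
  have hxk : x ⟨k, hkn⟩ ≤ y j := by
    rw [sum_firstIndices_succ x hkn] at htight
    linarith [h.sum_firstIndices_le hx hkn.le]
  calc ∑ m ∈ s, y m ≤ ∑ m ∈ firstIndices n k, y m + y j := herase
    _ ≤ ∑ m ∈ firstIndices n k, y m + y i := by gcongr; exact hy hij
    _ ≤ ∑ m ∈ firstIndices n k, x m + x i :=
      sum_firstIndices_add_le_of_le (k := ⟨k, hkn⟩) hx hy (Fin.le_def.2 hki.le) hij hxk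
        (h.sum_firstIndices_le hx j.2)

theorem Majorizes.exists_card_eq_sum_add_single_le (hx : Antitone x) (hy : Antitone y)
    (h : Majorizes x y) {i j : Fin n} (hij : i ≤ j) (s : Finset (Fin n)) :
    ∃ t : Finset (Fin n), #t = #s ∧
      ∑ m ∈ s, (y + Pi.single j 1 : Fin n → ℤ) m ≤ ∑ m ∈ t, (x + Pi.single i 1 : Fin n → ℤ) m := by
  have hsn : #s ≤ n := by simpa using card_le_univ s
  have hys := h.sum_le_sum_firstIndices hx s
  simp only [Pi.add_apply, sum_add_distrib, sum_pi_single']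
  by_cases htight : j ∈ s ∧ #s ≤ i ∧ ∑ m ∈ firstIndices n #s, x m ≤ ∑ m ∈ s, y m
  swap
  · refine ⟨firstIndices n #s, card_firstIndices hsn, ?_⟩
    simp only [mem_firstIndices]
    grind
  obtain ⟨hjs, hsi, htight⟩ := htight
  obtain ⟨k, hk⟩ : ∃ k, #s = k + 1 := ⟨#s - 1, by have := card_pos.2 ⟨j, hjs⟩; omega⟩
  have hik : i ∉ firstIndices n k := by rw [mem_firstIndices]; omega
  refine ⟨insert i (firstIndices n k), ?_, ?_⟩
  · rw [card_insert_of_notMem hik, card_firstIndices (by omega), hk]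
  rw [if_pos hjs, if_pos (mem_insert_self _ _), sum_insert hik]
  have := h.sum_le_sum_firstIndices_add_of_tight hx hy hij hjs hk (by omega) (hk ▸ htight)
  linarith

end Majorization

/-- Majorization is invariant under permuting either vector, so `x + e_i` and `y + e_j` need
not be re-sorted. -/
theorem majorizes_add_single {n : ℕ} (x y : Fin n → ℤ)
    (hx_sorted : Antitone x) (hy_sorted : Antitone y)
    (hmaj : Majorizes x y) (i j : Fin n) (hij : i ≤ j) :
    Majorizes (x + Pi.single i 1) (y + Pi.single j 1) :=
  ⟨hmaj.exists_card_eq_sum_add_single_le hx_sorted hy_sorted hij, by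
    simp [sum_add_distrib, hmaj.2]⟩
end
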